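/- arXiv:2502.14583 — 2 statements merged into one kernel-verified Lean document; each statement's English description precedes it below -/
import Mathlib

section
/- Let $p$ and $p'$ be two functions on $[M]^D$ (conditioned on a fixed $y$) factorizing autoregressively as $p(x) = \prod_{d=1}^D P_d(x_d \mid x_{<d})$ and $p'(x) = \prod_{d=1}^D P'_d(x_d \mid x_{<d})$, where $p$ is a probability distribution, each $P'_d \ge P_d$ pointwise with $P'_d - P_d \le c\,P_d$ for $c = 4\epsilon e^{4\epsilon}$, and $\sum_{x_d} P'_d(x_d\mid x_{<d}) = e^{2\epsilon}$ for each prefix. Then $\sum_{x \in [M]^D} |p'(x) - p(x)| \le 2 e^{4\epsilon}(e^{2D\epsilon} - 1)$. Moreover, if $0 < \epsilon < 1/(4D)$, this is at most $8eD\epsilon$. -/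
/-! Since `P ≤ P'` pointwise, `p ≤ p'`, so the L¹ distance is just `∑ p' - ∑ p`. Summing out the
coordinates of an autoregressive product from the last one to the first shows that its total
mass is the product of the per-coordinate masses, so the distance is exactly
`e^{2Dε} - 1`; both bounds follow from elementary estimates on the exponential. -/

open Finset

section Autoregressive

variable {ι α R : Type*} [Fintype ι] [Fintype α]

theorem sum_sum_update_eq_card_smul [DecidableEq ι] [AddCommMonoid R] (a : ι)
    (f : (ι → α) → R) :
    ∑ x, ∑ m, f (Function.update x a m) = Fintype.card α • ∑ x, f x := by
  let σ : Equiv.Perm ((ι → α) × α) :=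
    Function.Involutive.toPerm (fun p ↦ (Function.update p.1 a p.2, p.1 a)) fun p ↦ by simp
  calc ∑ x, ∑ m, f (Function.update x a m) = ∑ p, f (σ p).1 := Fintype.sum_prod_type' _ |>.symm
    _ = ∑ p : (ι → α) × α, f p.1 := Equiv.sum_comp σ (fun p ↦ f p.1)
    _ = Fintype.card α • ∑ x, f x := by
      rw [Fintype.sum_prod_type, smul_sum]; simp

variable [LinearOrder ι] [CommSemiring R] (Q : ι → (ι → α) → R) (c : R)
  (hdep : ∀ d (x x' : ι → α), (∀ e, e ≤ d → x e = x' e) → Q d x = Q d x')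
  (hsum : ∀ d (x : ι → α), ∑ m, Q d (Function.update x d m) = c)
include hdep hsum

-- Coordinates outside `s` are free; the factor `card α ^ #s` sits on the left to avoid the
-- truncated subtraction `card ι - #s`.
theorem card_pow_mul_sum_prod_eq (s : Finset ι) :
    (Fintype.card α : R) ^ #s * ∑ x, ∏ d ∈ s, Q d x =
      c ^ #s * Fintype.card α ^ Fintype.card ι := by
  induction s using Finset.induction_on_max with
  | empty => simp
  | insert a s hlt ih =>
    have hfree : ∀ x m, ∏ d ∈ s, Q d (Function.update x a m) = ∏ d ∈ s, Q d x := fun x m ↦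
      prod_congr rfl fun d hd ↦ hdep d _ _ fun e he ↦
        Function.update_of_ne (he.trans_lt (hlt d hd)).ne m x
    have hstep : (Fintype.card α : R) * ∑ x, Q a x * ∏ d ∈ s, Q d x =
        c * ∑ x, ∏ d ∈ s, Q d x := by
      rw [← nsmul_eq_mul, ← sum_sum_update_eq_card_smul a]
      simp only [hfree, ← sum_mul, hsum, mul_sum]
    have ha : a ∉ s := fun ha ↦ (hlt a ha).false
    simp only [card_insert_of_notMem ha, prod_insert ha]
    calc (Fintype.card α : R) ^ (#s + 1) * ∑ x, Q a x * ∏ d ∈ s, Q d x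
        = Fintype.card α ^ #s * (Fintype.card α * ∑ x, Q a x * ∏ d ∈ s, Q d x) := by ring
      _ = c * (Fintype.card α ^ #s * ∑ x, ∏ d ∈ s, Q d x) := by rw [hstep]; ring
      _ = c ^ (#s + 1) * Fintype.card α ^ Fintype.card ι := by rw [ih]; ring

theorem sum_prod_eq_pow [IsDomain R] [CharZero R] [Nonempty α] :
    ∑ x, ∏ d, Q d x = c ^ Fintype.card ι := by
  have h := card_pow_mul_sum_prod_eq Q c hdep hsum univ
  rw [card_univ, mul_comm (c ^ _)] at h
  exact mul_left_cancel₀ (pow_ne_zero _ (Nat.cast_ne_zero.2 Fintype.card_ne_zero)) h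

end Autoregressive

theorem autoregressive_upper_bracket_L1_general (D M : ℕ) (hM : 0 < M) (ε : ℝ) (hε : 0 ≤ ε)
    (P P' : Fin D → (Fin D → Fin M) → ℝ)
    (hPdep : ∀ d (x x' : Fin D → Fin M), (∀ e : Fin D, e ≤ d → x e = x' e) → P d x = P d x')
    (hP'dep : ∀ d (x x' : Fin D → Fin M), (∀ e : Fin D, e ≤ d → x e = x' e) →
      P' d x = P' d x')
    (hPnonneg : ∀ d x, 0 ≤ P d x)
    (hPsum : ∀ (d : Fin D) (x : Fin D → Fin M),
      ∑ m : Fin M, P d (Function.update x d m) = 1)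
    (hdom : ∀ d x, P d x ≤ P' d x)
    (hP'sum : ∀ (d : Fin D) (x : Fin D → Fin M),
      ∑ m : Fin M, P' d (Function.update x d m) = Real.exp (2 * ε)) :
    (∑ x : Fin D → Fin M, |(∏ d, P' d x) - ∏ d, P d x| ≤
        2 * Real.exp (4 * ε) * (Real.exp (2 * D * ε) - 1)) ∧
      (0 < ε → ε < 1 / (4 * D) →
        ∑ x : Fin D → Fin M, |(∏ d, P' d x) - ∏ d, P d x| ≤
          8 * Real.exp 1 * D * ε) := by
  have : Nonempty (Fin M) := ⟨⟨0, hM⟩⟩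
  have hL1 : ∑ x : Fin D → Fin M, |(∏ d, P' d x) - ∏ d, P d x| =
      Real.exp (2 * D * ε) - 1 := by
    simp_rw [abs_of_nonneg (sub_nonneg.2 (prod_le_prod (fun d _ ↦ hPnonneg d _)
      fun d _ ↦ hdom d _))]
    rw [sum_sub_distrib, sum_prod_eq_pow P' _ hP'dep hP'sum, sum_prod_eq_pow P 1 hPdep hPsum,
      Fintype.card_fin, one_pow, ← Real.exp_nat_mul]
    ring_nf
  have hgrowth : 0 ≤ Real.exp (2 * D * ε) - 1 := sub_nonneg.2 (Real.one_le_exp (by positivity))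
  refine ⟨?_, fun _ hεD ↦ ?_⟩
  · rw [hL1]
    exact le_mul_of_one_le_left hgrowth
      (by linarith [Real.one_le_exp (by positivity : 0 ≤ 4 * ε)])
  · have hsmall : 4 * D * ε ≤ 1 := by
      rcases D.eq_zero_or_pos with rfl | hD
      · simp
      · have := (lt_div_iff₀ (by positivity)).1 hεD
        linarith
    have hexp := Real.abs_exp_sub_one_le (x := 2 * D * ε)
      (by rw [abs_of_nonneg (by positivity)]; linarith)
    rw [abs_of_nonneg hgrowth, abs_of_nonneg (by positivity)] at hexp
    calc ∑ x : Fin D → Fin M, |(∏ d, P' d x) - ∏ d, P d x|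
        = Real.exp (2 * D * ε) - 1 := hL1
      _ ≤ 2 * (2 * D * ε) := hexp
      _ ≤ 8 * Real.exp 1 * D * ε := by
        nlinarith [Real.add_one_le_exp 1, mul_nonneg (Nat.cast_nonneg D : (0 : ℝ) ≤ D) hε]

/-- Telescoping bound for upper brackets of autoregressive models on `[M]^D`.
`P d x` represents the conditional probability `P_d(x_d ∣ x_{<d})` (depending only on
`x_{≤ d}`), `p x = ∏_d P_d(x_d ∣ x_{<d})` is a probability distribution, and `P'`
satisfies `P ≤ P' ≤ (1 + 4ε e^{4ε}) P` with per-coordinate total mass `e^{2ε}`. Then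
`∑_x |p'(x) - p(x)| ≤ 2 e^{4ε}(e^{2Dε} - 1)`, which is at most `8 e D ε` when
`0 < ε < 1/(4D)`. -/
theorem autoregressive_upper_bracket_L1 (D M : ℕ) (hM : 0 < M) (ε : ℝ) (hε : 0 ≤ ε)
    (P P' : Fin D → (Fin D → Fin M) → ℝ)
    (hPdep : ∀ d (x x' : Fin D → Fin M), (∀ e : Fin D, e ≤ d → x e = x' e) → P d x = P d x')
    (hP'dep : ∀ d (x x' : Fin D → Fin M), (∀ e : Fin D, e ≤ d → x e = x' e) →
      P' d x = P' d x')
    (hPnonneg : ∀ d x, 0 ≤ P d x)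
    (hPsum : ∀ (d : Fin D) (x : Fin D → Fin M),
      ∑ m : Fin M, P d (Function.update x d m) = 1)
    (hdom : ∀ d x, P d x ≤ P' d x)
    (hratio : ∀ d x, P' d x - P d x ≤ 4 * ε * Real.exp (4 * ε) * P d x)
    (hP'sum : ∀ (d : Fin D) (x : Fin D → Fin M),
      ∑ m : Fin M, P' d (Function.update x d m) = Real.exp (2 * ε)) :
    (∑ x : Fin D → Fin M, |(∏ d, P' d x) - ∏ d, P d x| ≤
        2 * Real.exp (4 * ε) * (Real.exp (2 * D * ε) - 1)) ∧
      (0 < ε → ε < 1 / (4 * D) →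
        ∑ x : Fin D → Fin M, |(∏ d, P' d x) - ∏ d, P d x| ≤
          8 * Real.exp 1 * D * ε) :=
  autoregressive_upper_bracket_L1_general D M hM ε hε P P' hPdep hP'dep hPnonneg hPsum hdom hP'sum
end

section
/- Let $u, u': \mathscr{X} \to \mathbb{R}$ be measurable energy functions on a measurable space $\mathscr{X}$ of finite measure with $\sup_x |u(x) - u'(x)| \le \epsilon$, and suppose $\int e^{-u} < \infty$. Define the Gibbs density $p(x) = e^{-u(x)}/\int e^{-u(s)}ds$ and the inflated function $p'(x) = e^{-u'(x)+2\epsilon}/\int e^{-u'(s)}ds$. Then $p'(x) \ge p(x)$ for all $x$, and $\int |p'(x) - p(x)|\,dx \le 3\epsilon e^{4\epsilon} + \epsilon e^{\epsilon} \le 4\epsilon\, e^{\max(4\epsilon, 1)}$. -/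
/-!
Since `u` and `u'` differ by at most `ε`, `e^{-u} ≤ e^{ε} e^{-u'}` pointwise and hence
`∫ e^{-u'} ≤ e^{ε} ∫ e^{-u}`; the two factors `e^{ε}` together are absorbed by the inflation
`e^{2ε}`, so `p ≤ p'`. Because `p'` dominates `p`, the `L¹` distance is the difference of
the total masses, `∫ p' - ∫ p = e^{2ε} - 1 ≤ 2ε e^{2ε}`, which is below both stated bounds.
-/

open MeasureTheory Real

lemma Real.exp_neg_le_exp_neg_add_of_abs_sub_le {a b ε : ℝ} (h : |a - b| ≤ ε) :
    exp (-a) ≤ exp (-b + ε) :=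
  exp_le_exp.2 (by linarith [(abs_le.1 h).1])

lemma Real.exp_sub_one_le_mul_exp (x : ℝ) : exp x - 1 ≤ x * exp x := by
  have h := mul_le_mul_of_nonneg_left (one_sub_le_exp_neg x) (exp_pos x).le
  rw [← exp_add, add_neg_cancel, exp_zero] at h
  linarith

section Integral

variable {X : Type*} [MeasurableSpace X] {μ : Measure X}

lemma integral_abs_sub_of_ae_le {f g : X → ℝ} (hf : Integrable f μ) (hg : Integrable g μ)
    (hfg : f ≤ᵐ[μ] g) : ∫ x, |g x - f x| ∂μ = ∫ x, g x ∂μ - ∫ x, f x ∂μ := by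
  rw [← integral_sub hg hf]
  refine integral_congr_ae ?_
  filter_upwards [hfg] with x hx
  exact abs_of_nonneg (sub_nonneg.2 hx)

variable {u u' : X → ℝ} {ε : ℝ}

lemma MeasureTheory.Integrable.exp_neg_of_abs_sub_le (hint : Integrable (fun x => exp (-u x)) μ)
    (hu' : AEMeasurable u' μ) (hclose : ∀ x, |u x - u' x| ≤ ε) :
    Integrable (fun x => exp (-u' x)) μ := by
  refine (hint.const_mul (exp ε)).mono hu'.neg.exp.aestronglyMeasurable
    (ae_of_all _ fun x => ?_)
  rw [norm_of_nonneg (exp_pos _).le, norm_of_nonneg (by positivity), ← exp_add, add_comm]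
  exact exp_neg_le_exp_neg_add_of_abs_sub_le (abs_sub_comm (u x) _ ▸ hclose x)

lemma integral_exp_neg_le_exp_mul (hint : Integrable (fun x => exp (-u x)) μ)
    (hint' : Integrable (fun x => exp (-u' x)) μ) (hclose : ∀ x, |u x - u' x| ≤ ε) :
    ∫ x, exp (-u' x) ∂μ ≤ exp ε * ∫ x, exp (-u x) ∂μ := by
  rw [← integral_const_mul]
  refine integral_mono hint' (hint.const_mul _) fun x => ?_
  rw [← exp_add, add_comm]
  exact exp_neg_le_exp_neg_add_of_abs_sub_le (abs_sub_comm (u x) _ ▸ hclose x)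

lemma exp_neg_div_integral_le (hμ : μ ≠ 0) (hint : Integrable (fun x => exp (-u x)) μ)
    (hu' : AEMeasurable u' μ) (hclose : ∀ x, |u x - u' x| ≤ ε) (x : X) :
    exp (-u x) / ∫ s, exp (-u s) ∂μ ≤ exp (-u' x + 2 * ε) / ∫ s, exp (-u' s) ∂μ := by
  have : NeZero μ := ⟨hμ⟩
  have hint' := hint.exp_neg_of_abs_sub_le hu' hclose
  have hZ := integral_exp_pos (f := fun x => -u x) hint
  have hZ' := integral_exp_pos (f := fun x => -u' x) hint'
  rw [div_le_div_iff₀ hZ hZ']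
  calc exp (-u x) * ∫ s, exp (-u' s) ∂μ
      ≤ exp (-u' x + ε) * (exp ε * ∫ s, exp (-u s) ∂μ) :=
        mul_le_mul (exp_neg_le_exp_neg_add_of_abs_sub_le (hclose x))
          (integral_exp_neg_le_exp_mul hint hint' hclose) hZ'.le (exp_pos _).le
    _ = exp (-u' x + 2 * ε) * ∫ s, exp (-u s) ∂μ := by
        rw [← mul_assoc, ← exp_add]; ring_nf

lemma integral_exp_neg_add_div_integral (hZ : ∫ s, exp (-u s) ∂μ ≠ 0) (c : ℝ) :
    ∫ x, exp (-u x + c) / ∫ s, exp (-u s) ∂μ ∂μ = exp c := by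
  simp only [exp_add]
  rw [integral_div, integral_mul_const, mul_div_right_comm, div_self hZ, one_mul]

end Integral

lemma Real.exp_two_mul_sub_one_le {ε : ℝ} (hε : 0 ≤ ε) :
    exp (2 * ε) - 1 ≤ 3 * ε * exp (4 * ε) + ε * exp ε := by
  have h24 : exp (2 * ε) ≤ exp (4 * ε) := exp_le_exp.2 (by linarith)
  calc exp (2 * ε) - 1 ≤ 2 * ε * exp (2 * ε) := exp_sub_one_le_mul_exp _
    _ ≤ 3 * ε * exp (4 * ε) + ε * exp ε := by
        nlinarith [mul_le_mul_of_nonneg_left h24 hε, mul_nonneg hε (exp_pos ε).le,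
          mul_nonneg hε (exp_pos (4 * ε)).le]

lemma Real.three_mul_exp_four_mul_add_mul_exp_le {ε : ℝ} (hε : 0 ≤ ε) :
    3 * ε * exp (4 * ε) + ε * exp ε ≤ 4 * ε * exp (max (4 * ε) 1) := by
  have h4 : exp (4 * ε) ≤ exp (max (4 * ε) 1) := exp_le_exp.2 (le_max_left _ _)
  have h1 : exp ε ≤ exp (max (4 * ε) 1) :=
    exp_le_exp.2 ((by linarith : ε ≤ 4 * ε).trans (le_max_left _ _))
  nlinarith

theorem ebm_upper_bracket_general {X : Type*} [MeasurableSpace X] (μ : Measure X)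
    (hμ : μ ≠ 0) (u u' : X → ℝ)
    (hu' : Measurable u')
    (ε : ℝ) (hε : 0 ≤ ε) (hclose : ∀ x, |u x - u' x| ≤ ε)
    (hint : Integrable (fun x => Real.exp (-u x)) μ) :
    (∀ x : X,
      Real.exp (-u x) / (∫ s, Real.exp (-u s) ∂μ) ≤
        Real.exp (-u' x + 2 * ε) / (∫ s, Real.exp (-u' s) ∂μ)) ∧
    (∫ x, |Real.exp (-u' x + 2 * ε) / (∫ s, Real.exp (-u' s) ∂μ) -
        Real.exp (-u x) / (∫ s, Real.exp (-u s) ∂μ)| ∂μ) ≤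
      3 * ε * Real.exp (4 * ε) + ε * Real.exp ε ∧
    3 * ε * Real.exp (4 * ε) + ε * Real.exp ε ≤ 4 * ε * Real.exp (max (4 * ε) 1) := by
  have : NeZero μ := ⟨hμ⟩
  have hint' := hint.exp_neg_of_abs_sub_le hu'.aemeasurable hclose
  have hZ := (integral_exp_pos (f := fun x => -u x) hint).ne'
  have hZ' := (integral_exp_pos (f := fun x => -u' x) hint').ne'
  have hle := exp_neg_div_integral_le hμ hint hu'.aemeasurable hclose
  have hp'int : Integrable (fun x => exp (-u' x + 2 * ε) / ∫ s, exp (-u' s) ∂μ) μ := by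
    simpa only [exp_add] using (hint'.mul_const _).div_const _
  have hL1 : ∫ x, |exp (-u' x + 2 * ε) / (∫ s, exp (-u' s) ∂μ) -
      exp (-u x) / ∫ s, exp (-u s) ∂μ| ∂μ = exp (2 * ε) - 1 := by
    rw [integral_abs_sub_of_ae_le (hint.div_const _) hp'int (ae_of_all _ hle),
      integral_exp_neg_add_div_integral hZ', integral_div, div_self hZ]
  exact ⟨hle, hL1 ▸ exp_two_mul_sub_one_le hε, three_mul_exp_four_mul_add_mul_exp_le hε⟩

/-- Upper bracket for Gibbs (energy-based) densities: if `sup_x |u(x) - u'(x)| ≤ ε` and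
`∫ e^{-u} < ∞` on a finite nonzero measure space, then the inflated function
`p'(x) = e^{-u'(x)+2ε} / ∫ e^{-u'}` pointwise dominates the Gibbs density
`p(x) = e^{-u(x)} / ∫ e^{-u}`, and `∫ |p' - p| ≤ 3ε e^{4ε} + ε e^{ε} ≤ 4ε e^{max(4ε,1)}`. -/
theorem ebm_upper_bracket {X : Type*} [MeasurableSpace X] (μ : Measure X)
    [IsFiniteMeasure μ] (hμ : μ ≠ 0) (u u' : X → ℝ)
    (hu : Measurable u) (hu' : Measurable u')
    (ε : ℝ) (hε : 0 ≤ ε) (hclose : ∀ x, |u x - u' x| ≤ ε)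
    (hint : Integrable (fun x => Real.exp (-u x)) μ) :
    (∀ x : X,
      Real.exp (-u x) / (∫ s, Real.exp (-u s) ∂μ) ≤
        Real.exp (-u' x + 2 * ε) / (∫ s, Real.exp (-u' s) ∂μ)) ∧
    (∫ x, |Real.exp (-u' x + 2 * ε) / (∫ s, Real.exp (-u' s) ∂μ) -
        Real.exp (-u x) / (∫ s, Real.exp (-u s) ∂μ)| ∂μ) ≤
      3 * ε * Real.exp (4 * ε) + ε * Real.exp ε ∧
    3 * ε * Real.exp (4 * ε) + ε * Real.exp ε ≤ 4 * ε * Real.exp (max (4 * ε) 1) :=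
  ebm_upper_bracket_general μ hμ u u' hu' ε hε hclose hint
end
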